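/- Let θ ∈ (0, π) with θ ≠ π/2, and ν, μ ∈ ℂ with ν + μ ∉ −ℕ and Re μ ≥ 1/2. Then the series ∑_{k=0}^∞ (Γ(ν+μ+k+1)/Γ(ν+k+3/2))·((μ+1/2)_k/k!)·cos((ν+μ+2k+1)θ) diverges, i.e., its terms do not tend to 0. -/

import Mathlib

/-!
Euler's limit formula `n ^ z * n! / (z (z + 1) ⋯ (z + n)) → Γ(z)` says `Γ(z + n + 1) ~ n ^ z * n!`
when `Γ(z) ≠ 0`; the recursion `Γ(z + n + 1) = (z + n) Γ(z + n)`, which only has to hold for large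
`n`, carries `Γ(z + n) ~ n ^ (z - 1) * n!` down to every `z ∈ ℂ`, poles included. Hence the
coefficient of the cosine is asymptotic to `k ^ (2μ - 1) / Γ(μ + 1/2)`, whose modulus is bounded
below because `Re μ ≥ 1/2`. Terms tending to `0` would thus force `cos (α + 2kθ) → 0`, and then,
through `cos (x + β) = cos x cos β - sin x sin β` and `sin 2θ ≠ 0`, also `sin (α + 2kθ) → 0`,
contradicting `sin² + cos² = 1`.
-/

open Filter Asymptotics Finset
open scoped Nat

lemma Real.sin_two_mul_ne_zero_of_ne_pi_div_two {θ : ℝ} (h0 : 0 < θ) (hπ : θ < Real.pi)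
    (hθ : θ ≠ Real.pi / 2) : Real.sin (2 * θ) ≠ 0 := by
  have hsin := Real.sin_pos_of_pos_of_lt_pi h0 hπ
  have hcos : Real.cos θ ≠ 0 := fun hcos => hθ <| Real.injOn_cos ⟨h0.le, hπ.le⟩
    ⟨by positivity, by linarith [Real.pi_pos]⟩ (by rw [hcos, Real.cos_pi_div_two])
  rw [Real.sin_two_mul]
  exact mul_ne_zero (mul_ne_zero two_ne_zero hsin.ne') hcos

lemma isBigO_mul_of_le_norm {α 𝕜 : Type*} [NormedDivisionRing 𝕜] {l : Filter α}
    {f g : α → 𝕜} {ε : ℝ} (hε : 0 < ε) (hf : ∀ᶠ x in l, ε ≤ ‖f x‖) :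
    g =O[l] fun x => f x * g x := by
  refine IsBigO.of_bound ε⁻¹ ?_
  filter_upwards [hf] with x hx
  rw [norm_mul, ← mul_assoc]
  exact le_mul_of_one_le_left (norm_nonneg _) ((one_le_inv_mul₀ hε).mpr hx)

namespace Complex

lemma one_le_norm_natCast_cpow {n : ℕ} (hn : 1 ≤ n) {s : ℂ} (hs : 0 ≤ s.re) :
    1 ≤ ‖(n : ℂ) ^ s‖ := by
  rw [norm_natCast_cpow_of_pos hn]
  exact Real.one_le_rpow (by exact_mod_cast hn) hs

lemma Gamma_add_nat_eq_mul_prod {z : ℂ} (hz : ∀ k : ℕ, z ≠ -k) (n : ℕ) :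
    Gamma (z + n) = Gamma z * ∏ j ∈ range n, (z + j) := by
  induction n with
  | zero => simp
  | succ n ih =>
    have hzn : z + n ≠ 0 := fun h => hz n (eq_neg_of_add_eq_zero_left h)
    rw [Nat.cast_succ, ← add_assoc, Gamma_add_one _ hzn, ih, prod_range_succ]
    ring

lemma isEquivalent_Gamma_add_one_add_nat {z : ℂ} (hz : ∀ k : ℕ, z ≠ -k) :
    (fun n : ℕ => Gamma (z + 1 + n)) ~[atTop] fun n => (n : ℂ) ^ z * n ! := by
  refine (isEquivalent_of_tendsto_one ?_).symm
  have hΓ := Gamma_ne_zero hz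
  have hlim : Tendsto (fun n => GammaSeq z n / Gamma z) atTop (nhds 1) := by
    simpa [hΓ] using (GammaSeq_tendsto_Gamma z).div_const (Gamma z)
  refine hlim.congr fun n => ?_
  have : z + 1 + n = z + ((n + 1 : ℕ) : ℂ) := by push_cast; ring
  simp only [Pi.div_apply, GammaSeq, this, Gamma_add_nat_eq_mul_prod hz, div_div, mul_comm]

lemma isEquivalent_Gamma_add_nat_of_add_one {z : ℂ}
    (h : (fun n : ℕ => Gamma (z + 1 + n)) ~[atTop] fun n => (n : ℂ) ^ z * n !) :
    (fun n : ℕ => Gamma (z + n)) ~[atTop] fun n => (n : ℂ) ^ (z - 1) * n ! := by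
  have hlin : (fun n : ℕ => z + n) ~[atTop] fun n => (n : ℂ) := by
    refine (isEquivalent_of_tendsto_one ?_).symm
    exact (tendsto_natCast_div_add_atTop z).congr fun n => by simp [add_comm]
  refine (h.div hlin).congr_left ?_ |>.congr_right ?_
  · filter_upwards [tendsto_natCast_atTop_atTop.eventually_gt_atTop ‖z‖] with n hn
    have hzn : z + n ≠ 0 := by
      intro h0
      have : ‖z‖ = n := by simpa using congrArg norm (eq_neg_of_add_eq_zero_left h0)
      linarith
    simp only [Pi.div_apply]
    rw [add_right_comm, Gamma_add_one _ hzn, mul_div_cancel_left₀ _ hzn]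
  · filter_upwards [eventually_ne_atTop 0] with n hn
    have hn' : (n : ℂ) ≠ 0 := Nat.cast_ne_zero.mpr hn
    simp only [Pi.div_apply, cpow_sub _ _ hn', cpow_one]
    ring

theorem isEquivalent_Gamma_add_nat (z : ℂ) :
    (fun n : ℕ => Gamma (z + n)) ~[atTop] fun n => (n : ℂ) ^ (z - 1) * n ! := by
  obtain ⟨m, hm⟩ := exists_nat_gt (-z.re)
  induction m generalizing z with
  | zero =>
    refine isEquivalent_Gamma_add_nat_of_add_one (isEquivalent_Gamma_add_one_add_nat ?_)
    rintro k rfl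
    simp only [neg_re, natCast_re, neg_neg, CharP.cast_eq_zero] at hm
    exact absurd hm k.cast_nonneg.not_gt
  | succ m ih =>
    refine isEquivalent_Gamma_add_nat_of_add_one ?_
    have hm' : -(z + 1).re < m := by rw [add_re, one_re]; push_cast at hm; linarith
    simpa only [add_sub_cancel_right] using ih (z + 1) hm'

theorem isEquivalent_Gamma_ratio (a b c : ℂ) :
    (fun k : ℕ => Gamma (a + k) / Gamma (c + k) * (Gamma (b + k) / Gamma b / k !)) ~[atTop]
      fun k => (Gamma b)⁻¹ * (k : ℂ) ^ (a - c + b - 1) := by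
  have h := ((isEquivalent_Gamma_add_nat a).div (isEquivalent_Gamma_add_nat c)).mul
    ((isEquivalent_Gamma_add_nat b).div
      (IsEquivalent.refl (u := fun k : ℕ => Gamma b * (k ! : ℂ))))
  refine (h.congr_left (Eventually.of_forall fun k => by simp [div_div])).congr_right ?_
  filter_upwards [eventually_ne_atTop 0] with k hk
  have hk' : (k : ℂ) ≠ 0 := Nat.cast_ne_zero.mpr hk
  have hfac : (k ! : ℂ) ≠ 0 := Nat.cast_ne_zero.mpr k.factorial_ne_zero
  simp only [Pi.div_apply, Pi.mul_apply, cpow_sub _ _ hk', cpow_add _ _ hk', cpow_one]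
  field_simp

lemma not_tendsto_cos_add_nat_mul (α β : ℂ) (hβ : sin β ≠ 0) :
    ¬ Tendsto (fun k : ℕ => cos (α + k * β)) atTop (nhds 0) := by
  intro hcos
  have hcos' : Tendsto (fun k : ℕ => cos (α + k * β + β)) atTop (nhds 0) := by
    refine (hcos.comp (tendsto_add_atTop_nat 1)).congr fun k => ?_
    rw [Function.comp_apply, Nat.cast_succ, add_one_mul, add_assoc]
  have hsin : Tendsto (fun k : ℕ => sin (α + k * β)) atTop (nhds 0) := by
    have hrec : ∀ k : ℕ,
        (cos (α + k * β) * cos β - cos (α + k * β + β)) / sin β = sin (α + k * β) := by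
      intro k
      rw [cos_add (α + k * β) β]
      field_simp
      ring
    simpa using (((hcos.mul_const (cos β)).sub hcos').div_const (sin β)).congr hrec
  have hone := (hsin.pow 2).add (hcos.pow 2)
  simp only [sin_sq_add_cos_sq] at hone
  rw [tendsto_const_nhds_iff] at hone
  norm_num at hone

lemma not_tendsto_mul_cos_add_nat_mul {c : ℕ → ℂ} {C s : ℂ}
    (hc : c ~[atTop] fun k => C * (k : ℂ) ^ s) (hC : C ≠ 0) (hs : 0 ≤ s.re)
    (α β : ℂ) (hβ : sin β ≠ 0) :
    ¬ Tendsto (fun k : ℕ => c k * cos (α + k * β)) atTop (nhds 0) := by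
  intro h
  have hlim := (hc.mul (IsEquivalent.refl (u := fun k : ℕ => cos (α + k * β)))).tendsto_nhds h
  refine not_tendsto_cos_add_nat_mul α β hβ
    ((isBigO_mul_of_le_norm (norm_pos_iff.mpr hC) ?_).trans_tendsto hlim)
  filter_upwards [eventually_ge_atTop 1] with k hk
  rw [norm_mul]
  exact le_mul_of_one_le_right (norm_nonneg C) (one_le_norm_natCast_cpow hk hs)

end Complex

theorem fourier_series_diverges (θ : ℝ) (hθ0 : 0 < θ) (hθπ : θ < Real.pi)
    (hθ : θ ≠ Real.pi / 2) (ν μ : ℂ)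
    (hμ : (1 : ℝ) / 2 ≤ μ.re) :
    ¬ Tendsto (fun k : ℕ =>
      Complex.Gamma (ν + μ + k + 1) / Complex.Gamma (ν + k + 3 / 2) *
        (Complex.Gamma (μ + 1 / 2 + k) / Complex.Gamma (μ + 1 / 2) / (Nat.factorial k : ℂ)) *
        Complex.cos ((ν + μ + 2 * k + 1) * (θ : ℂ))) atTop (nhds 0) := by
  intro h
  have hb : 0 < (μ + 1 / 2).re := by
    simp only [one_div, Complex.add_re, Complex.inv_re, Complex.re_ofNat, Complex.normSq_ofNat,
      div_self_mul_self']
    linarith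
  have hexp : 0 ≤ (ν + μ + 1 - (ν + 3 / 2) + (μ + 1 / 2) - 1).re := by
    simp only [one_div, Complex.sub_re, Complex.add_re, Complex.one_re, Complex.div_ofNat_re,
      Complex.re_ofNat, Complex.inv_re, Complex.normSq_ofNat, div_self_mul_self', sub_nonneg]
    linarith
  have hβ : Complex.sin (2 * θ) ≠ 0 := by
    rw [← Complex.ofReal_ofNat, ← Complex.ofReal_mul, ← Complex.ofReal_sin]
    exact_mod_cast Real.sin_two_mul_ne_zero_of_ne_pi_div_two hθ0 hθπ hθ
  refine Complex.not_tendsto_mul_cos_add_nat_mul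
    (Complex.isEquivalent_Gamma_ratio (ν + μ + 1) (μ + 1 / 2) (ν + 3 / 2))
    (inv_ne_zero (Complex.Gamma_ne_zero_of_re_pos hb)) hexp ((ν + μ + 1) * θ) (2 * θ) hβ ?_
  convert h using 6 <;> ring
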